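/- Let y : [0,T) → ℝ be continuous on [0,T), differentiable on (0,T), and satisfy y(0) > 0 and y'(t) ≥ c·y(t)^{1/θ} for all t ∈ (0,T), where c > 0 and θ ∈ (0,1). Then for all t ∈ (0,T) with 1 − ((1−θ)/θ)·c·y(0)^{(1−θ)/θ}·t > 0, one has y(t) ≥ y(0)·(1 − ((1−θ)/θ)·c·y(0)^{(1−θ)/θ}·t)^{−θ/(1−θ)}. -/

import Mathlib

/-!
For `q = (1 - θ) / θ` we have `1 / θ = 1 + q`, so along a positive solution of
`y' ≥ c y^(1+q)` the function `y^(-q)` has derivative `-q y^(-q-1) y' ≤ -q c`. Hence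
`y(t)^(-q) ≤ y(0)^(-q) - q c t`, and raising to the power `-1/q = -θ/(1-θ)` gives the bound.
Positivity of `y` on `[0, t]` comes first: `y` cannot come down to the level `y(0)/2`, since
at such a point its derivative is positive.
-/

open Real Set Filter Topology
open scoped ENNReal

lemma HasDerivAt.eventually_lt_nhdsGT {f : ℝ → ℝ} {f' x : ℝ} (hf : HasDerivAt f f' x)
    (hf' : 0 < f') : ∀ᶠ z in 𝓝[>] x, f x < f z := by
  filter_upwards [(hasDerivAt_iff_tendsto_slope_left_right.mp hf).2.eventually (lt_mem_nhds hf'),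
    self_mem_nhdsWithin] with z hslope hz
  exact (slope_pos_iff_of_le (le_of_lt hz)).mp hslope

lemma le_image_of_hasDerivAt_pos_of_eq {f : ℝ → ℝ} {a b m : ℝ}
    (hf : ContinuousOn f (Icc a b)) (ha : m < f a)
    (hderiv : ∀ x ∈ Ioo a b, f x = m → ∃ f', HasDerivAt f f' x ∧ 0 < f') :
    ∀ x ∈ Icc a b, m ≤ f x := by
  show Icc a b ⊆ f ⁻¹' Ici m
  refine IsClosed.Icc_subset_of_forall_mem_nhdsWithin ?_ ha.le ?_
  · rw [inter_comm]
    exact hf.preimage_isClosed_of_isClosed isClosed_Icc isClosed_Ici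
  rintro x ⟨hmx, hax, hxb⟩
  rcases (show m ≤ f x from hmx).lt_or_eq with hlt | heq
  · have hcont : ContinuousWithinAt f (Ioo x b) x :=
      (hf x ⟨hax, hxb.le⟩).mono fun z hz => ⟨hax.trans hz.1.le, hz.2.le⟩
    rw [← nhdsWithin_Ioo_eq_nhdsGT hxb]
    exact hcont.eventually (lt_mem_nhds hlt) |>.mono fun z hz => le_of_lt hz
  · have hxa : a < x := hax.lt_of_ne (by rintro rfl; exact ha.ne heq)
    obtain ⟨f', hd, hf'⟩ := hderiv x ⟨hxa, hxb⟩ heq.symm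
    exact (hd.eventually_lt_nhdsGT hf').mono fun z hz => heq ▸ le_of_lt hz

lemma rpow_neg_le_sub_of_mul_rpow_le_deriv {f : ℝ → ℝ} {a b c q : ℝ} (hq : 0 ≤ q)
    (hf : ContinuousOn f (Icc a b)) (hpos : ∀ x ∈ Icc a b, 0 < f x)
    (hderiv : ∀ x ∈ Ioo a b, ∃ f', HasDerivAt f f' x ∧ c * f x ^ (1 + q) ≤ f') :
    ∀ x ∈ Icc a b, f x ^ (-q) ≤ f a ^ (-q) - q * c * (x - a) := by
  have hderiv_rpow : ∀ x ∈ Ioo a b, ∃ g', HasDerivAt (fun s => f s ^ (-q)) g' x ∧ g' ≤ -q * c := by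
    intro x hx
    obtain ⟨f', hd, hle⟩ := hderiv x hx
    have hfx := hpos x (Ioo_subset_Icc_self hx)
    refine ⟨_, hd.rpow_const (Or.inl hfx.ne'), ?_⟩
    have hc_le : c ≤ f' * f x ^ (-q - 1) := calc
      c = c * f x ^ (1 + q) * f x ^ (-q - 1) := by
        rw [mul_assoc, ← rpow_add hfx, show 1 + q + (-q - 1) = 0 by ring, rpow_zero, mul_one]
      _ ≤ f' * f x ^ (-q - 1) := by gcongr
    linarith [mul_le_mul_of_nonneg_left hc_le hq]
  intro x hx
  have hcont : ContinuousOn (fun s => f s ^ (-q)) (Icc a b) :=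
    hf.rpow_const fun s hs => Or.inl (hpos s hs).ne'
  have key := (convex_Icc a b).image_sub_le_mul_sub_of_deriv_le hcont
    (fun s hs => by
      rw [interior_Icc] at hs
      obtain ⟨g', hd, -⟩ := hderiv_rpow s hs
      exact hd.differentiableAt.differentiableWithinAt)
    (fun s hs => by
      rw [interior_Icc] at hs
      obtain ⟨g', hd, hle⟩ := hderiv_rpow s hs
      exact hd.deriv ▸ hle)
    a ⟨le_rfl, hx.1.trans hx.2⟩ x hx hx.1
  linarith

lemma mul_rpow_neg_inv_le_of_rpow_neg_le {x y L q : ℝ} (hx : 0 < x) (hy : 0 < y) (hL : 0 < L)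
    (hq : 0 < q) (h : x ^ (-q) ≤ y ^ (-q) * L) : y * L ^ (-q⁻¹) ≤ x := calc
  y * L ^ (-q⁻¹) = (y ^ (-q) * L) ^ (-q⁻¹) := by
    rw [mul_rpow (rpow_nonneg hy.le _) hL.le, ← rpow_mul hy.le, neg_mul_neg,
      mul_inv_cancel₀ hq.ne', rpow_one]
  _ ≤ (x ^ (-q)) ^ (-q⁻¹) :=
    rpow_le_rpow_of_nonpos (rpow_pos_of_pos hx _) h (neg_nonpos.mpr (inv_nonneg.mpr hq.le))
  _ = x := by rw [← rpow_mul hx.le, neg_mul_neg, mul_inv_cancel₀ hq.ne', rpow_one]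

lemma le_image_of_mul_rpow_le_deriv {f : ℝ → ℝ} {a b c q : ℝ} (hc : 0 < c) (hq : 0 < q)
    (hab : a ≤ b) (hf : ContinuousOn f (Icc a b)) (ha : 0 < f a)
    (hderiv : ∀ x ∈ Ioo a b, ∃ f', HasDerivAt f f' x ∧ c * f x ^ (1 + q) ≤ f')
    (hL : 0 < 1 - q * c * f a ^ q * (b - a)) :
    f a * (1 - q * c * f a ^ q * (b - a)) ^ (-q⁻¹) ≤ f b := by
  have hpos : ∀ x ∈ Icc a b, 0 < f x := by
    have hhalf := le_image_of_hasDerivAt_pos_of_eq hf (half_lt_self ha) fun x hx hfx => by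
      obtain ⟨f', hd, hle⟩ := hderiv x hx
      exact ⟨f', hd, lt_of_lt_of_le (by rw [hfx]; positivity) hle⟩
    exact fun x hx => (half_pos ha).trans_le (hhalf x hx)
  have hb : b ∈ Icc a b := right_mem_Icc.mpr hab
  refine mul_rpow_neg_inv_le_of_rpow_neg_le (hpos b hb) ha hL hq ?_
  calc f b ^ (-q) ≤ f a ^ (-q) - q * c * (b - a) :=
        rpow_neg_le_sub_of_mul_rpow_le_deriv hq.le hf hpos hderiv b hb
    _ = f a ^ (-q) * (1 - q * c * f a ^ q * (b - a)) := by
        rw [rpow_neg ha.le]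
        field_simp [(rpow_pos_of_pos ha q).ne']

theorem stmt_2_general (T : ℝ≥0∞) (c θ : ℝ) (hc : 0 < c) (hθ : θ ∈ Set.Ioo (0:ℝ) 1)
    (y : ℝ → ℝ)
    (hcont : ContinuousOn y {t : ℝ | 0 ≤ t ∧ ENNReal.ofReal t < T})
    (hy0 : 0 < y 0)
    (hderiv : ∀ t : ℝ, 0 < t → ENNReal.ofReal t < T →
      ∃ y' : ℝ, HasDerivAt y y' t ∧ y' ≥ c * y t ^ (1 / θ)) :
    ∀ t : ℝ, 0 < t → ENNReal.ofReal t < T →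
      1 - ((1 - θ) / θ) * c * y 0 ^ ((1 - θ) / θ) * t > 0 →
      y t ≥ y 0 * (1 - ((1 - θ) / θ) * c * y 0 ^ ((1 - θ) / θ) * t) ^ (-θ / (1 - θ)) := by
  intro t ht htT hL
  obtain ⟨hθ0, hθ1⟩ := hθ
  have hq : 0 < (1 - θ) / θ := div_pos (sub_pos.mpr hθ1) hθ0
  have hmem : ∀ x ∈ Icc 0 t, ENNReal.ofReal x < T := fun x hx =>
    (ENNReal.ofReal_le_ofReal hx.2).trans_lt htT
  have hderiv' : ∀ x ∈ Ioo 0 t, ∃ y', HasDerivAt y y' x ∧ c * y x ^ (1 + (1 - θ) / θ) ≤ y' := by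
    intro x hx
    rw [show 1 + (1 - θ) / θ = 1 / θ by field_simp; ring]
    exact hderiv x hx.1 (hmem x (Ioo_subset_Icc_self hx))
  have hbound := le_image_of_mul_rpow_le_deriv hc hq ht.le
    (hcont.mono fun x hx => ⟨hx.1, hmem x hx⟩) hy0 hderiv' (by simpa only [sub_zero] using hL)
  rw [show -θ / (1 - θ) = -((1 - θ) / θ)⁻¹ by rw [inv_div, neg_div]]
  simpa only [sub_zero, ge_iff_le] using hbound

theorem stmt_2 (T : ℝ≥0∞) (hT : 0 < T) (c θ : ℝ) (hc : 0 < c) (hθ : θ ∈ Set.Ioo (0:ℝ) 1)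
    (y : ℝ → ℝ)
    (hcont : ContinuousOn y {t : ℝ | 0 ≤ t ∧ ENNReal.ofReal t < T})
    (hy0 : 0 < y 0)
    (hderiv : ∀ t : ℝ, 0 < t → ENNReal.ofReal t < T →
      ∃ y' : ℝ, HasDerivAt y y' t ∧ y' ≥ c * y t ^ (1 / θ)) :
    ∀ t : ℝ, 0 < t → ENNReal.ofReal t < T →
      1 - ((1 - θ) / θ) * c * y 0 ^ ((1 - θ) / θ) * t > 0 →
      y t ≥ y 0 * (1 - ((1 - θ) / θ) * c * y 0 ^ ((1 - θ) / θ) * t) ^ (-θ / (1 - θ)) :=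
  stmt_2_general T c θ hc hθ y hcont hy0 hderiv
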